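/- arXiv:1808.04483 — 3 statements merged into one kernel-verified Lean document; each statement's English description precedes it below -/
import Mathlib

section
/- Let N > 0, α ∈ (0,1), κ ∈ [0,1), T_I > 0 and q > 0 be real numbers, and suppose −N·(1−κ)·ln(1−α) > 1/T_I. Then there exists a real number I with 0 < I < N/(1+q) such that (N − (1+q)·I)·(1 − (1−α)^I)·(1−κ) = I / T_I; that is, the globally homogeneous GRR has a nontrivial fixed point (I, q·I) with positive infected population. -/
/-!
Write `f I` for the left side minus the right side of the fixed-point equation. Then `f 0 = 0`,
and `f'(0) = -N (1 - κ) log (1 - α) - 1 / T_I > 0` by hypothesis, so `f` is positive just to the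
right of `0`. At `I = N / (1 + q)` the first factor vanishes and `f = -I / T_I < 0`, so the
intermediate value theorem gives a root in between.
-/

open Set Filter Topology

lemma HasDerivWithinAt.eventually_pos_of_eq_zero {f : ℝ → ℝ} {a d : ℝ}
    (hf : HasDerivWithinAt f d (Ioi a) a) (hd : 0 < d) (ha : f a = 0) :
    ∀ᶠ x in 𝓝[>] a, 0 < f x := by
  have hslope := (hasDerivWithinAt_iff_tendsto_slope' (lt_irrefl a)).mp hf
  filter_upwards [hslope.eventually (eventually_gt_nhds hd), self_mem_nhdsWithin]
    with x hx hax
  exact pos_of_slope_pos hax hx ha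

lemma exists_mem_Ioo_eq_zero_of_hasDerivWithinAt_pos {f : ℝ → ℝ} {a b d : ℝ} (hab : a < b)
    (hcont : ContinuousOn f (Icc a b)) (ha : f a = 0) (hf : HasDerivWithinAt f d (Ioi a) a)
    (hd : 0 < d) (hb : f b < 0) : ∃ c ∈ Ioo a b, f c = 0 := by
  obtain ⟨ε, hfε, haε, hεb⟩ :=
    ((hf.eventually_pos_of_eq_zero hd ha).and (Ioo_mem_nhdsGT hab)).exists
  obtain ⟨c, ⟨hεc, hcb⟩, hc⟩ :=
    intermediate_value_Ioo' hεb.le (hcont.mono (Icc_subset_Icc_left haε.le)) ⟨hb, hfε⟩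
  exact ⟨c, ⟨haε.trans hεc, hcb⟩, hc⟩

/-- The defect `H(I, qI) - I` of the GRR map along the line `R = q I`. -/
noncomputable def grrDefect (N α κ T_I q I : ℝ) : ℝ :=
  (N - (1 + q) * I) * (1 - (1 - α) ^ I) * (1 - κ) - I / T_I

section grrDefect

variable {N α κ T_I q : ℝ}

lemma grrDefect_zero : grrDefect N α κ T_I q 0 = 0 := by
  simp [grrDefect]

lemma grrDefect_div_one_add (hq : 1 + q ≠ 0) :
    grrDefect N α κ T_I q (N / (1 + q)) = -(N / (1 + q) / T_I) := by
  simp [grrDefect, mul_div_cancel₀ N hq]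

lemma continuous_grrDefect (hα : α < 1) : Continuous (grrDefect N α κ T_I q) := by
  have : 0 < 1 - α := sub_pos.mpr hα
  unfold grrDefect
  fun_prop (disch := positivity)

lemma hasDerivAt_grrDefect_zero (hα : α < 1) :
    HasDerivAt (grrDefect N α κ T_I q) (-N * (1 - κ) * Real.log (1 - α) - 1 / T_I) 0 := by
  have hpow := (Real.hasStrictDerivAt_const_rpow (sub_pos.mpr hα) 0).hasDerivAt
  have hlin := ((hasDerivAt_id' (0 : ℝ)).const_mul (1 + q)).const_sub N
  refine (((hlin.mul (hpow.const_sub 1)).mul_const (1 - κ)).sub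
    ((hasDerivAt_id' (0 : ℝ)).div_const T_I)).congr_deriv ?_
  simp only [Real.rpow_zero, mul_zero, sub_zero, sub_self]
  ring

end grrDefect

theorem stmt_1_general (N α κ T_I q : ℝ) (hN : 0 < N) (hα : α ∈ Set.Ioo (0:ℝ) 1)
    (hT : 0 < T_I) (hq : 0 < q)
    (hcond : -N * (1 - κ) * Real.log (1 - α) > 1 / T_I) :
    ∃ I : ℝ, 0 < I ∧ I < N / (1 + q) ∧
      (N - (1 + q) * I) * (1 - (1 - α) ^ I) * (1 - κ) = I / T_I := by
  have hM : 0 < N / (1 + q) := by positivity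
  obtain ⟨I, ⟨hI0, hIM⟩, hI⟩ := exists_mem_Ioo_eq_zero_of_hasDerivWithinAt_pos hM
    (continuous_grrDefect hα.2).continuousOn grrDefect_zero
    (hasDerivAt_grrDefect_zero hα.2).hasDerivWithinAt (sub_pos.mpr hcond)
    (by rw [grrDefect_div_one_add (by positivity)]; exact neg_neg_of_pos (by positivity))
  exact ⟨I, hI0, hIM, sub_eq_zero.mp hI⟩

theorem stmt_1 (N α κ T_I q : ℝ) (hN : 0 < N) (hα : α ∈ Set.Ioo (0:ℝ) 1)
    (hκ : κ ∈ Set.Ico (0:ℝ) 1) (hT : 0 < T_I) (hq : 0 < q)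
    (hcond : -N * (1 - κ) * Real.log (1 - α) > 1 / T_I) :
    ∃ I : ℝ, 0 < I ∧ I < N / (1 + q) ∧
      (N - (1 + q) * I) * (1 - (1 - α) ^ I) * (1 - κ) = I / T_I :=
  stmt_1_general N α κ T_I q hN hα hT hq hcond
end

section
/- Let N > 0, μN > 0, μΩ > 0, κ ∈ [0,1), T_I > 0 and q > 0 be real numbers with μN < μΩ, and set α = μN/μΩ. Let b : ℕ → ℝ be a sequence with μN < b(t) ≤ μΩ for all t and b(t) → μΩ as t → ∞. Let I, R : ℕ → ℝ satisfy the locally homogeneous GRR recurrence I(t+1) = (N − I(t) − R(t))·(1 − (1 − μN/b(t))^{I(t)})·(b(t)/μΩ)·(1−κ) + (1 − 1/T_I)·I(t) and R(t+1) = I(t)/T_I + (1 − 1/(q·T_I))·R(t). If I(t) → ι and R(t) → ρ as t → ∞, then (ι, ρ) is a fixed point of the globally homogeneous GRR: H(ι,ρ) = ι and G(ι,ρ) = ρ. -/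
theorem stmt_4 (N μN μΩ κ T_I q : ℝ) (hN : 0 < N) (hμN : 0 < μN) (hμΩ : 0 < μΩ)
    (hlt : μN < μΩ) (hκ : κ ∈ Set.Ico (0:ℝ) 1) (hT : 0 < T_I) (hq : 0 < q)
    (b I R : ℕ → ℝ) (hb : ∀ t, μN < b t ∧ b t ≤ μΩ)
    (hbtend : Filter.Tendsto b Filter.atTop (nhds μΩ))
    (hI : ∀ t, I (t + 1) =
      (N - I t - R t) * (1 - (1 - μN / b t) ^ (I t)) * (b t / μΩ) * (1 - κ)
        + (1 - 1 / T_I) * I t)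
    (hR : ∀ t, R (t + 1) = I t / T_I + (1 - 1 / (q * T_I)) * R t)
    (ι ρ : ℝ) (hItend : Filter.Tendsto I Filter.atTop (nhds ι))
    (hRtend : Filter.Tendsto R Filter.atTop (nhds ρ)) :
    (N - ι - ρ) * (1 - (1 - μN / μΩ) ^ ι) * (1 - κ) + (1 - 1 / T_I) * ι = ι ∧
      ι / T_I + (1 - 1 / (q * T_I)) * ρ = ρ := by
  have hI1 : Filter.Tendsto (fun t => I (t + 1)) Filter.atTop (nhds ι) :=
    hItend.comp (Filter.tendsto_add_atTop_nat 1)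
  have hR1 : Filter.Tendsto (fun t => R (t + 1)) Filter.atTop (nhds ρ) :=
    hRtend.comp (Filter.tendsto_add_atTop_nat 1)
  have hbase : Filter.Tendsto (fun t => 1 - μN / b t) Filter.atTop (nhds (1 - μN / μΩ)) :=
    Filter.Tendsto.const_sub _ ((tendsto_const_nhds).div hbtend hμΩ.ne')
  have hpowne : (1 : ℝ) - μN / μΩ ≠ 0 := by
    have : μN / μΩ < 1 := (div_lt_one hμΩ).2 hlt
    linarith
  have hrpow : Filter.Tendsto (fun t => (1 - μN / b t) ^ (I t)) Filter.atTop
      (nhds ((1 - μN / μΩ) ^ ι)) :=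
    Filter.Tendsto.rpow hbase hItend (Or.inl hpowne)
  have hRHS : Filter.Tendsto (fun t =>
      (N - I t - R t) * (1 - (1 - μN / b t) ^ (I t)) * (b t / μΩ) * (1 - κ)
        + (1 - 1 / T_I) * I t) Filter.atTop
      (nhds ((N - ι - ρ) * (1 - (1 - μN / μΩ) ^ ι) * (μΩ / μΩ) * (1 - κ)
        + (1 - 1 / T_I) * ι)) := by
    exact ((((Filter.Tendsto.const_sub N hItend).sub hRtend).mul
      (Filter.Tendsto.const_sub 1 hrpow)).mul
      (hbtend.div tendsto_const_nhds hμΩ.ne')).mul_const _ |>.add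
      ((tendsto_const_nhds).mul hItend)
  have hRHS' := hRHS.congr (fun t => (hI t).symm)
  have heq1 : (N - ι - ρ) * (1 - (1 - μN / μΩ) ^ ι) * (μΩ / μΩ) * (1 - κ)
      + (1 - 1 / T_I) * ι = ι := tendsto_nhds_unique hRHS' hI1
  rw [div_self hμΩ.ne', mul_one] at heq1
  have hRHS2 : Filter.Tendsto (fun t => I t / T_I + (1 - 1 / (q * T_I)) * R t)
      Filter.atTop (nhds (ι / T_I + (1 - 1 / (q * T_I)) * ρ)) :=
    (hItend.div_const _).add ((tendsto_const_nhds).mul hRtend)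
  have heq2 : ι / T_I + (1 - 1 / (q * T_I)) * ρ = ρ :=
    tendsto_nhds_unique (hRHS2.congr (fun t => (hR t).symm)) hR1
  exact ⟨heq1, heq2⟩
end

section
/- Let ρ₀ > 0 and Δr be real numbers, and let ζ : ℕ → ℝ satisfy ζ(t+2) = ρ₀ + √(((ζ(t+1) + Δr)² + (ζ(t) − Δr)²)/2) for all t ∈ ℕ. Then ζ(t) → +∞ as t → ∞; consequently, for every real M there exists t̂ ∈ ℕ such that ζ(t) > M for all t > t̂. (Hence, since the domain Ω is bounded, the infectivity-front region B̃ₜ of radius ζ(t) eventually covers Ω and μ(B̃ₜ) = μ(Ω) for all sufficiently large t.) -/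
theorem stmt_7 (ρ₀ Δr : ℝ) (hρ : 0 < ρ₀) (ζ : ℕ → ℝ)
    (hrec : ∀ t : ℕ, ζ (t + 2) =
      ρ₀ + Real.sqrt (((ζ (t + 1) + Δr) ^ 2 + (ζ t - Δr) ^ 2) / 2)) :
    Filter.Tendsto ζ Filter.atTop Filter.atTop ∧
      ∀ M : ℝ, ∃ that : ℕ, ∀ t : ℕ, that < t → M < ζ t := by
  have hsqrt : ∀ a b : ℝ, (a + b) / 2 ≤ Real.sqrt ((a ^ 2 + b ^ 2) / 2) := by
    intro a b
    have h1 : ((a + b) / 2) ^ 2 ≤ (a ^ 2 + b ^ 2) / 2 := by nlinarith [sq_nonneg (a - b)]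
    calc (a + b) / 2 ≤ |(a + b) / 2| := le_abs_self _
      _ = Real.sqrt (((a + b) / 2) ^ 2) := (Real.sqrt_sq_eq_abs _).symm
      _ ≤ _ := Real.sqrt_le_sqrt h1
  set C := min (ζ 0) (ζ 1) with hC
  have key : ∀ n : ℕ, C + ρ₀ * ((n : ℝ) / 2 - 1) ≤ ζ n := by
    intro n
    induction n using Nat.strong_induction_on with
    | _ n ih =>
      match n with
      | 0 =>
        have := min_le_left (ζ 0) (ζ 1)
        simp only [Nat.cast_zero]
        nlinarith
      | 1 =>
        have := min_le_right (ζ 0) (ζ 1)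
        simp only [Nat.cast_one]
        nlinarith
      | (n + 2) =>
        have h1 := ih (n + 1) (by omega)
        have h0 := ih n (by omega)
        have hs := hsqrt (ζ (n + 1) + Δr) (ζ n - Δr)
        have heq := hrec n
        push_cast at h1 ⊢
        nlinarith
  have key2 : ∀ M : ℝ, ∃ that : ℕ, ∀ t : ℕ, that < t → M < ζ t := by
    intro M
    obtain ⟨N, hN⟩ := exists_nat_gt ((M - C) / ρ₀ * 2 + 2)
    refine ⟨N, fun t ht => ?_⟩
    have hk := key t
    have htN : (N : ℝ) < t := by exact_mod_cast ht
    have hdiv : (M - C) / ρ₀ < (t : ℝ) / 2 - 1 := by linarith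
    have hmul : M - C < ρ₀ * ((t : ℝ) / 2 - 1) := by
      have := (div_lt_iff₀ hρ).mp hdiv
      linarith [this]
    linarith
  refine ⟨?_, key2⟩
  rw [Filter.tendsto_atTop]
  intro b
  obtain ⟨N, hN⟩ := key2 b
  exact Filter.eventually_atTop.2 ⟨N + 1, fun t ht => (hN t (by omega)).le⟩
end
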